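/- arXiv:2009.00741 — 6 statements merged into one kernel-verified Lean document; each statement's English description precedes it below -/
import Mathlib

section
/- Let G be a triangle-free simple graph on n vertices with minimum degree δ, and let r ≥ 4. Suppose U ⊆ V(G) with |U| = 2r is such that the auxiliary graph H on vertex set U, where two vertices are joined exactly when their distance in G is precisely 2, is a disjoint union of two cycles each of length r. Then n ≥ 2·⌈rδ/2⌉. -/
/-!
In a triangle-free graph two distinct vertices with a common neighbour are at distance exactly 2.
Hence the neighbours in `U` of any vertex form a clique of the distance-2 graph
`H = distTwoGraph G U`. Since `H` is a disjoint union of two triangle-free cycles, such a clique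
has at most two vertices and lies in one cycle. Double counting the edges between a cycle `A` and
its neighbourhood `N(A)` gives `r * δ ≤ 2 * |N(A)|`, so `|N(A)| ≥ ⌈rδ/2⌉`, and the
neighbourhoods of the two cycles are disjoint.
-/

def distTwoGraph {V : Type*} (G : SimpleGraph V) (U : Set V) : SimpleGraph U where
  Adj a b := G.dist a b = 2
  symm := ⟨by intro a b h; rwa [SimpleGraph.dist_comm]⟩
  loopless := ⟨by intro a h; simp [SimpleGraph.dist_self] at h⟩

def graphDisjUnion {α β : Type*} (A : SimpleGraph α) (B : SimpleGraph β) :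
    SimpleGraph (α ⊕ β) where
  Adj x y := match x, y with
    | .inl a, .inl b => A.Adj a b
    | .inr a, .inr b => B.Adj a b
    | _, _ => False
  symm := ⟨by rintro (a | a) (b | b) h <;> simp_all <;> exact h.symm⟩
  loopless := ⟨by rintro (a | a) h <;> simp_all⟩

open SimpleGraph Finset

namespace SimpleGraph

variable {V α : Type*} {G : SimpleGraph V}

theorem IsClique.card_lt_of_cliqueFree {n : ℕ} {s : Finset V} (hs : G.IsClique (s : Set V))
    (hG : G.CliqueFree n) : #s < n := by
  by_contra! h
  obtain ⟨t, hts, ht⟩ := exists_subset_card_eq h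
  exact hG t ⟨hs.subset (coe_subset.mpr hts), ht⟩

theorem CliqueFree.dist_eq_two_of_adj_of_adj (hG : G.CliqueFree 3) {u v w : V} (huv : u ≠ v)
    (hu : G.Adj w u) (hv : G.Adj w v) : G.dist u v = 2 := by
  classical
  have : G.edist u v = 2 := edist_eq_two_iff.mpr
    ⟨huv, fun h => hG {w, u, v} (is3Clique_triple_iff.mpr ⟨hu, hv, h⟩),
      ⟨w, hu.symm, hv.symm⟩⟩
  simp [dist, this]

open Fin.CommRing in
theorem cycleGraph_cliqueFree_three {n : ℕ} (hn : 4 ≤ n) : (cycleGraph n).CliqueFree 3 := by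
  obtain ⟨m, rfl⟩ : ∃ m, n = m + 4 := ⟨n - 4, by omega⟩
  intro s hs
  obtain ⟨a, b, c, hab, hac, hbc, -⟩ := is3Clique_iff.mp hs
  have h1 : (1 : Fin (m + 4)) ≠ 0 := by simp
  have h3 : (3 : Fin (m + 4)) ≠ 0 := by simp [Fin.ext_iff, Nat.mod_eq_of_lt]
  -- `a - b`, `b - c`, `c - a` are each `±1` and sum to `0`, forcing `1 = 0` or `3 = 0`.
  rcases (cycleGraph_adj (n := m + 2)).mp hab with p1 | p1 <;>
    rcases (cycleGraph_adj (n := m + 2)).mp hac with p2 | p2 <;>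
    rcases (cycleGraph_adj (n := m + 2)).mp hbc with p3 | p3 <;> grind

theorem card_mul_le_mul_card_biUnion_neighborFinset [DecidableEq V] [G.LocallyFinite]
    [DecidableRel G.Adj] {S : Finset V} {δ k : ℕ} (hδ : ∀ u ∈ S, δ ≤ G.degree u)
    (hk : ∀ w, #{u ∈ S | G.Adj w u} ≤ k) : #S * δ ≤ k * #(S.biUnion (G.neighborFinset ·)) := by
  rw [mul_comm k]
  refine card_mul_le_card_mul G.Adj (fun u hu => ?_) (fun w _ => ?_)
  · have : (S.biUnion (G.neighborFinset ·)).bipartiteAbove G.Adj u = G.neighborFinset u := by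
      ext w
      simpa [bipartiteAbove] using fun h => ⟨u, hu, h⟩
    rw [this, card_neighborFinset_eq_degree]
    exact hδ u hu
  · simpa [bipartiteBelow, adj_comm] using hk w

theorem card_filter_adj_map_le_two [Fintype α] [DecidableRel G.Adj]
    (hG : G.CliqueFree 3) {K : SimpleGraph α} (hK : K.CliqueFree 3) {f : α ↪ V}
    (hf : ∀ i j, G.dist (f i) (f j) = 2 → K.Adj i j) (w : V) :
    #{u ∈ univ.map f | G.Adj w u} ≤ 2 := by
  rw [filter_map, card_map, ← Nat.lt_succ_iff]
  refine IsClique.card_lt_of_cliqueFree (fun i hi j hj hij => ?_) hK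
  simp only [coe_filter, mem_univ, true_and, Function.comp_apply, Set.mem_ofPred_eq] at hi hj
  exact hf i j (hG.dist_eq_two_of_adj_of_adj (f.injective.ne hij) hi hj)

theorem disjoint_biUnion_neighborFinset [DecidableEq V] [G.LocallyFinite] (hG : G.CliqueFree 3)
    {S T : Finset V} (hST : Disjoint S T) (hd : ∀ u ∈ S, ∀ v ∈ T, G.dist u v ≠ 2) :
    Disjoint (S.biUnion (G.neighborFinset ·)) (T.biUnion (G.neighborFinset ·)) := by
  refine Finset.disjoint_left.mpr fun w hwS hwT => ?_
  obtain ⟨u, hu, huw⟩ := mem_biUnion.mp hwS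
  obtain ⟨v, hv, hvw⟩ := mem_biUnion.mp hwT
  rw [mem_neighborFinset] at huw hvw
  exact hd u hu v hv (hG.dist_eq_two_of_adj_of_adj
    (by rintro rfl; exact Finset.disjoint_left.mp hST hu hv) huw.symm hvw.symm)

end SimpleGraph

theorem radius_girth_stmt4_general {V : Type*} [Fintype V] (G : SimpleGraph V) (δ r : ℕ)
    (hr : 4 ≤ r) (hfree : G.CliqueFree 3)
    (hδ : ∀ v : V, δ ≤ (G.neighborSet v).ncard)
    (U : Finset V)
    (hiso : Nonempty
      (distTwoGraph G (U : Set V) ≃g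
        graphDisjUnion (SimpleGraph.cycleGraph r) (SimpleGraph.cycleGraph r))) :
    2 * ((r * δ + 1) / 2) ≤ Fintype.card V := by
  classical
  obtain ⟨e⟩ := hiso
  let f : Fin r ⊕ Fin r ↪ V := e.symm.toEquiv.toEmbedding.trans (Function.Embedding.subtype _)
  have hf (x y) (h : G.dist (f x) (f y) = 2) :
      (graphDisjUnion (cycleGraph r) (cycleGraph r)).Adj x y :=
    e.symm.map_adj_iff.mp h
  let A := univ.map (Function.Embedding.inl.trans f)
  let B := univ.map (Function.Embedding.inr.trans f)
  have hdeg (u : V) : δ ≤ G.degree u := (hδ u).trans_eq <| by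
    rw [← card_neighborSet_eq_degree, ← Nat.card_coe_set_eq, Nat.card_eq_fintype_card]
  have hA : r * δ ≤ 2 * #(A.biUnion (G.neighborFinset ·)) := by
    simpa [A] using card_mul_le_mul_card_biUnion_neighborFinset (fun u _ => hdeg u)
      (card_filter_adj_map_le_two hfree (cycleGraph_cliqueFree_three hr)
        fun i j => hf (.inl i) (.inl j))
  have hB : r * δ ≤ 2 * #(B.biUnion (G.neighborFinset ·)) := by
    simpa [B] using card_mul_le_mul_card_biUnion_neighborFinset (fun u _ => hdeg u)
      (card_filter_adj_map_le_two hfree (cycleGraph_cliqueFree_three hr)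
        fun i j => hf (.inr i) (.inr j))
  have hAB : Disjoint (A.biUnion (G.neighborFinset ·)) (B.biUnion (G.neighborFinset ·)) := by
    refine disjoint_biUnion_neighborFinset hfree ?_ ?_
    · simp [A, B, Finset.disjoint_left]
    · simp only [A, B, mem_map]
      rintro _ ⟨i, -, rfl⟩ _ ⟨j, -, rfl⟩ h
      exact hf _ _ h
  have hcard := card_union_of_disjoint hAB ▸ card_le_univ (_ ∪ _)
  omega

/-- If `G` is triangle-free with min degree `δ`, `|U| = 2r` with `r ≥ 4`, and
the auxiliary distance-2 graph on `U` is a disjoint union of two cycles of length `r`,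
then `n ≥ 2·⌈rδ/2⌉`. -/
theorem radius_girth_stmt4 {V : Type*} [Fintype V] (G : SimpleGraph V) (δ r : ℕ)
    (hr : 4 ≤ r) (hfree : G.CliqueFree 3)
    (hδ : ∀ v : V, δ ≤ (G.neighborSet v).ncard)
    (U : Finset V) (hU : U.card = 2 * r)
    (hiso : Nonempty
      (distTwoGraph G (U : Set V) ≃g
        graphDisjUnion (SimpleGraph.cycleGraph r) (SimpleGraph.cycleGraph r))) :
    2 * ((r * δ + 1) / 2) ≤ Fintype.card V :=
  radius_girth_stmt4_general G δ r hr hfree hδ U hiso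
end

section
/- Every connected triangle-free simple graph on n vertices with minimum degree δ ≥ 2 and radius exactly 3 satisfies n ≥ 2δ + 2. -/
/-!
Radius `3` means every vertex has eccentricity at least `3`: pick any `u` and a vertex `w` at
distance at least `3` from it. The closed neighbourhoods of `u` and `w` are balls of radius `2`
(in the open-ball convention), and two such balls around vertices at distance at least `3` are
disjoint. Each has at least `δ + 1` vertices, so `n ≥ 2δ + 2`.
-/

/-- The eccentricity of a vertex: the maximum distance to any other vertex. -/
noncomputable def eccentricity {V : Type*} (G : SimpleGraph V) (v : V) : ℕ :=
  ⨆ w, G.dist v w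

/-- The radius of a graph: the minimum eccentricity over all vertices. -/
noncomputable def graphRadius {V : Type*} (G : SimpleGraph V) : ℕ :=
  ⨅ v, eccentricity G v

namespace SimpleGraph

variable {V : Type*} (G : SimpleGraph V)

theorem natCast_dist_le_edist (u v : V) : (G.dist u v : ℕ∞) ≤ G.edist u v :=
  ENat.natCast_toNat_le_self _

variable {G} in
theorem disjoint_ball_of_add_le_edist_add_one {u w : V} {r s : ℕ∞}
    (h : r + s ≤ G.edist u w + 1) : Disjoint (G.ball u r) (G.ball w s) := by
  refine Set.disjoint_left.2 fun x hu hw => ?_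
  rw [mem_ball, edist_comm] at hu
  rw [mem_ball] at hw
  have htriangle := G.edist_triangle (u := u) (v := x) (w := w)
  lift G.edist u x to ℕ using hu.ne_top with a
  lift G.edist x w to ℕ using hw.ne_top with b
  lift G.edist u w to ℕ using ne_top_of_le_ne_top (by simp) htriangle with d
  obtain ⟨hr, hs⟩ := WithTop.add_ne_top.1 (ne_top_of_le_ne_top (by simp) h)
  lift r to ℕ using hr
  lift s to ℕ using hs
  norm_cast at *
  omega

theorem ncard_ball_two [Finite V] (c : V) :
    (G.ball c 2).ncard = (G.neighborSet c).ncard + 1 := by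
  rw [ball_two, Set.ncard_insert_of_notMem G.notMem_neighborSet_self]

theorem graphRadius_le_eccentricity (v : V) : graphRadius G ≤ eccentricity G v :=
  ciInf_le (OrderBot.bddBelow _) v

theorem exists_dist_eq_eccentricity [Finite V] (v : V) :
    ∃ w, G.dist v w = eccentricity G v := by
  have : Nonempty V := ⟨v⟩
  obtain ⟨w, hw⟩ := Finite.exists_max (G.dist v)
  exact ⟨w, le_antisymm (le_ciSup (Finite.bddAbove_range _) w) (ciSup_le hw)⟩

theorem graphRadius_of_isEmpty [IsEmpty V] : graphRadius G = 0 := by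
  simp [graphRadius]

end SimpleGraph

open SimpleGraph in
theorem radius_girth_stmt7_general {V : Type*} [Fintype V] (G : SimpleGraph V) (δ : ℕ)
    (hδ : ∀ v : V, δ ≤ (G.neighborSet v).ncard)
    (hrad : graphRadius G = 3) :
    2 * δ + 2 ≤ Fintype.card V := by
  rcases isEmpty_or_nonempty V with hV | ⟨⟨u⟩⟩
  · simp [G.graphRadius_of_isEmpty] at hrad
  obtain ⟨w, hw⟩ := G.exists_dist_eq_eccentricity u
  have hfar : 3 ≤ G.dist u w := hw ▸ hrad ▸ G.graphRadius_le_eccentricity u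
  have hdisj : Disjoint (G.ball u 2) (G.ball w 2) := by
    refine disjoint_ball_of_add_le_edist_add_one ?_
    calc (2 + 2 : ℕ∞) = (3 : ℕ) + 1 := by norm_num
      _ ≤ G.dist u w + 1 := by gcongr
      _ ≤ G.edist u w + 1 := by gcongr; exact G.natCast_dist_le_edist u w
  have hcount := Set.ncard_union_eq hdisj ▸ Set.ncard_le_card (G.ball u 2 ∪ G.ball w 2)
  rw [G.ncard_ball_two, G.ncard_ball_two, Nat.card_eq_fintype_card] at hcount
  linarith [hδ u, hδ w]

/-- Every connected triangle-free graph on `n` vertices with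
minimum degree `δ ≥ 2` and radius exactly `3` satisfies `n ≥ 2δ + 2`. -/
theorem radius_girth_stmt7 {V : Type*} [Fintype V] (G : SimpleGraph V) (δ : ℕ)
    (hconn : G.Connected) (hfree : G.CliqueFree 3) (hδ2 : 2 ≤ δ)
    (hδ : ∀ v : V, δ ≤ (G.neighborSet v).ncard)
    (hrad : graphRadius G = 3) :
    2 * δ + 2 ≤ Fintype.card V :=
  radius_girth_stmt7_general G δ hδ hrad
end

section
/- For any integers δ ≥ 2 and n ≥ 2δ + 2, there exists a connected triangle-free simple graph on n vertices with minimum degree δ and radius 3. -/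
open SimpleGraph Finset

section

variable {V : Type*}

theorem eccentricity_le_iff [Finite V] (G : SimpleGraph V) {v : V} {r : ℕ} :
    eccentricity G v ≤ r ↔ ∀ w, G.dist v w ≤ r :=
  have : Nonempty V := ⟨v⟩
  ciSup_le_iff (Set.finite_range _).bddAbove

theorem dist_le_eccentricity [Finite V] (G : SimpleGraph V) (v w : V) :
    G.dist v w ≤ eccentricity G v :=
  le_ciSup (Set.finite_range _).bddAbove w

theorem graphRadius_eq_of_forall [Finite V] (G : SimpleGraph V) {r : ℕ} {v₀ : V}
    (hv₀ : ∀ w, G.dist v₀ w ≤ r) (h : ∀ v, ∃ w, r ≤ G.dist v w) : graphRadius G = r := by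
  have : Nonempty V := ⟨v₀⟩
  refine le_antisymm ?_ (le_ciInf fun v => ?_)
  · exact (ciInf_le (OrderBot.bddBelow _) v₀).trans ((eccentricity_le_iff G).2 hv₀)
  · obtain ⟨w, hw⟩ := h v
    exact hw.trans (dist_le_eccentricity G v w)

theorem SimpleGraph.Reachable.three_le_dist_of_coloring {G : SimpleGraph V} {u v : V}
    (hr : G.Reachable u v) (c : G.Coloring Bool) (hc : c u ≠ c v) (hadj : ¬G.Adj u v) :
    3 ≤ G.dist u v := by
  obtain ⟨p, hp⟩ := hr.exists_walk_length_eq_dist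
  have hodd : Odd (G.dist u v) := by
    rw [← hp, c.odd_length_iff_not_congr]
    revert hc
    cases c u <;> cases c v <;> decide
  have hne : G.dist u v ≠ 1 := fun h => hadj (dist_eq_one_iff_adj.1 h)
  obtain ⟨k, hk⟩ := hodd
  omega

end

theorem le_ncard_neighborSet_of_forall_adj {n : ℕ} (G : SimpleGraph (Fin n)) (v : Fin n)
    (S : Finset ℕ) (h : ∀ m ∈ S, ∃ hm : m < n, G.Adj v ⟨m, hm⟩) :
    #S ≤ (G.neighborSet v).ncard := by
  have hsub : (S : Set ℕ) ⊆ Fin.val '' G.neighborSet v := fun m hm => by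
    obtain ⟨hm, hadj⟩ := h m hm
    exact ⟨⟨m, hm⟩, hadj, rfl⟩
  calc #S = (S : Set ℕ).ncard := (Set.ncard_coe_finset S).symm
    _ ≤ (Fin.val '' G.neighborSet v).ncard := Set.ncard_le_ncard hsub (Set.toFinite _)
    _ = (G.neighborSet v).ncard := Set.ncard_image_of_injective _ Fin.val_injective

namespace RadiusThree

variable (δ n : ℕ)

-- In the notation of the construction, `v_i = i - 1` and `w_j = δ + j`: the deleted edges are
-- `v_i w_i` and `v_{δ+1} w_j` for `j ≥ δ + 2`.
def partner (a : ℕ) : ℕ := if a ≤ δ then a + δ + 1 else min (a - (δ + 1)) δ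

def graph : SimpleGraph (Fin n) where
  Adj a b := (a.val ≤ δ ↔ δ < b.val) ∧ b.val ≠ partner δ a ∧ a.val ≠ partner δ b
  symm := ⟨fun _ _ h => ⟨by omega, h.2.2, h.2.1⟩⟩
  loopless := ⟨fun _ h => by omega⟩

variable {δ n}

theorem graph_adj_iff {a b : ℕ} (ha : a ≤ δ) (hb : δ < b) (han : a < n) (hbn : b < n) :
    (graph δ n).Adj ⟨a, han⟩ ⟨b, hbn⟩ ↔ b ≠ a + δ + 1 ∧ a ≠ min (b - (δ + 1)) δ := by
  simp only [graph, partner, if_pos ha, if_neg (Nat.not_le.2 hb)]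
  omega

def sideColoring : (graph δ n).Coloring Bool :=
  Coloring.mk (fun v => decide (v.val ≤ δ)) fun {a b} h => by
    have := h.1
    simp only [ne_eq, decide_eq_decide]
    omega

theorem partner_lt (hn : 2 * δ + 2 ≤ n) (a : ℕ) : partner δ a < n := by
  unfold partner; split_ifs <;> omega

theorem three_le_dist_partner (hconn : (graph δ n).Connected) (hn : 2 * δ + 2 ≤ n)
    (v : Fin n) : 3 ≤ (graph δ n).dist v ⟨partner δ v, partner_lt hn v⟩ := by
  refine (hconn.preconnected _ _).three_le_dist_of_coloring sideColoring ?_ fun h => h.2.1 rfl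
  change decide (v.val ≤ δ) ≠ decide (partner δ v ≤ δ)
  unfold partner
  split_ifs <;> simp <;> omega

theorem exists_walk_length_le_two_of_le (hδ : 2 ≤ δ) (hn : 2 * δ + 2 ≤ n) {a : ℕ} (ha : a ≤ δ)
    (han : a < n) : ∃ p : (graph δ n).Walk ⟨0, by omega⟩ ⟨a, han⟩, p.length ≤ 2 := by
  rcases Nat.eq_zero_or_pos a with rfl | ha0
  · exact ⟨.nil, by simp⟩
  -- a common neighbour `δ + 1 + k` of `0` and `a` needs `k ∉ {0, a}`
  obtain ⟨k, hk0, hkδ, hka⟩ : ∃ k, 0 < k ∧ k ≤ δ ∧ k ≠ a :=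
    ⟨if a = 1 then 2 else 1, by split_ifs <;> omega, by split_ifs <;> omega,
      by split_ifs <;> omega⟩
  have hb : δ + 1 + k < n := by omega
  have h0 := (graph_adj_iff (Nat.zero_le δ) (by omega) (by omega) hb).2 ⟨by omega, by omega⟩
  have ha := (graph_adj_iff ha (by omega) han hb).2 ⟨by omega, by omega⟩
  exact ⟨.cons h0 (.cons ha.symm .nil), by simp⟩

theorem exists_walk_length_le_three (hδ : 2 ≤ δ) (hn : 2 * δ + 2 ≤ n) (w : Fin n) :
    ∃ p : (graph δ n).Walk ⟨0, by omega⟩ w, p.length ≤ 3 := by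
  obtain ⟨b, hbn⟩ := w
  rcases le_or_gt b δ with hA | hB
  · obtain ⟨p, hp⟩ := exists_walk_length_le_two_of_le hδ hn hA hbn
    exact ⟨p, by omega⟩
  by_cases hb : b = δ + 1
  · subst hb
    obtain ⟨p, hp⟩ := exists_walk_length_le_two_of_le hδ hn (a := 1) (by omega) (by omega)
    have h1 := (graph_adj_iff (a := 1) (by omega) hB (by omega) hbn).2 ⟨by omega, by omega⟩
    exact ⟨p.concat h1, by simp; omega⟩
  · have h0 := (graph_adj_iff (Nat.zero_le δ) hB (by omega) hbn).2 ⟨by omega, by omega⟩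
    exact ⟨.cons h0 .nil, by simp⟩

theorem connected (hδ : 2 ≤ δ) (hn : 2 * δ + 2 ≤ n) : (graph δ n).Connected := by
  refine (connected_iff_exists_forall_reachable _).2 ⟨⟨0, by omega⟩, fun w => ?_⟩
  obtain ⟨p, -⟩ := exists_walk_length_le_three hδ hn w
  exact p.reachable

theorem le_ncard_neighborSet (hn : 2 * δ + 2 ≤ n) (v : Fin n) :
    δ ≤ ((graph δ n).neighborSet v).ncard := by
  -- the first `δ + 1` vertices of the other side, except the partner of `v`
  set lo := if v.val ≤ δ then δ + 1 else 0
  set S := (Ico lo (lo + δ + 1)).erase (partner δ v)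
  have hS : #S = δ := by
    rw [card_erase_of_mem, Nat.card_Ico]
    · omega
    · simp only [mem_Ico, lo, partner]
      split_ifs <;> omega
  refine hS ▸ le_ncard_neighborSet_of_forall_adj _ v S fun m hm => ?_
  simp only [S, mem_erase, mem_Ico, lo] at hm
  refine ⟨by split_ifs at hm <;> omega, ?_⟩
  simp only [graph, partner] at hm ⊢
  split_ifs at hm ⊢ <;> omega

theorem cliqueFree_three : (graph δ n).CliqueFree 3 :=
  sideColoring.colorable.cliqueFree (by norm_num)

end RadiusThree

/-- For `δ ≥ 2` and `n ≥ 2δ + 2` there is a connected triangle-free graph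
on `n` vertices with minimum degree `δ` and radius `3`. -/
theorem radius_girth_stmt9 (δ n : ℕ) (hδ : 2 ≤ δ) (hn : 2 * δ + 2 ≤ n) :
    ∃ G : SimpleGraph (Fin n), G.Connected ∧ G.CliqueFree 3 ∧
      (∀ v, δ ≤ (G.neighborSet v).ncard) ∧ graphRadius G = 3 := by
  have hconn := RadiusThree.connected hδ hn
  refine ⟨_, hconn, RadiusThree.cliqueFree_three, RadiusThree.le_ncard_neighborSet hn,
    graphRadius_eq_of_forall _ (v₀ := ⟨0, by omega⟩) (fun w => ?_)
      fun v => ⟨_, RadiusThree.three_le_dist_partner hconn hn v⟩⟩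
  obtain ⟨p, hp⟩ := RadiusThree.exists_walk_length_le_three hδ hn w
  exact (dist_le p).trans hp
end

section
/- Let r ≥ 4, δ ≥ 2, and c ≥ 0 be integers. Then there exists a connected triangle-free simple graph with n = 2⌈rδ/2⌉ + c vertices, minimum degree δ, and radius exactly r. -/
/-!
The graph is a blow-up of the cycle `C_{2r}`, realised as the circulant graph of `ZMod (2r)`
with jump `1`: a surjection `f` distributes the vertices into `2r` nonempty boxes, and two
vertices are adjacent iff their boxes are. Distances between different boxes are those of the
cycle and distances inside a box are `2`, so every eccentricity is `r`; the blow-up is bipartite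
because `2r` is even; and a vertex in box `i` sees the boxes `i ± 1`, whose sizes, following the
pattern `⌈δ/2⌉, ⌈δ/2⌉, ⌊δ/2⌋, ⌊δ/2⌋, …`, add up to at least `δ`, while all box sizes add up to
`2⌈rδ/2⌉`.
-/

open Function Finset

theorem eccentricity_eq_of_forall_dist_le {V : Type*} {G : SimpleGraph V} {v w : V} {k : ℕ}
    (hle : ∀ u, G.dist v u ≤ k) (hw : k ≤ G.dist v w) : eccentricity G v = k :=
  have : Nonempty V := ⟨w⟩
  le_antisymm (ciSup_le hle) (hw.trans (le_ciSup ⟨k, Set.forall_mem_range.mpr hle⟩ w))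

theorem graphRadius_eq_of_forall_eccentricity_eq {V : Type*} [Nonempty V] {G : SimpleGraph V}
    {k : ℕ} (h : ∀ v, eccentricity G v = k) : graphRadius G = k := by
  simp [graphRadius, h]

namespace SimpleGraph

section Comap

variable {V W : Type*} {G : SimpleGraph V} {H : SimpleGraph W}

theorem Reachable.dist_map_le (φ : G →g H) {u v : V} (h : G.Reachable u v) :
    H.dist (φ u) (φ v) ≤ G.dist u v := by
  obtain ⟨p, hp⟩ := h.exists_walk_length_eq_dist
  simpa [hp] using dist_le (p.map φ)

theorem Connected.exists_walk_length_pos_le (hH : H.Connected) {a b : W} (hab : H.Adj a b)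
    (c : W) : ∃ p : H.Walk a c, 0 < p.length ∧ p.length ≤ max 2 (H.dist a c) := by
  by_cases hac : a = c
  · subst hac
    exact ⟨.cons hab (.cons hab.symm .nil), by simp, by simp⟩
  · obtain ⟨p, hp⟩ := (hH a c).exists_walk_length_eq_dist
    exact ⟨p, hp ▸ hH.pos_dist_of_ne hac, hp.le.trans (le_max_right _ _)⟩

variable {f : V → W}

theorem Walk.exists_comap_length_eq (hf : Surjective f) {a b : W} (p : H.Walk a b)
    (hp : 0 < p.length) {v w : V} (hv : f v = a) (hw : f w = b) :
    ∃ q : (H.comap f).Walk v w, q.length = p.length := by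
  induction p generalizing v with
  | nil => simp at hp
  | @cons _ c _ hac p ih =>
    subst hv
    rcases Nat.eq_zero_or_pos p.length with h | h
    · obtain rfl := Walk.eq_of_length_eq_zero h
      exact ⟨.cons (comap_adj.mpr (hw ▸ hac)) .nil, by simp [h]⟩
    · obtain ⟨u, rfl⟩ := hf c
      obtain ⟨q, hq⟩ := ih h rfl hw
      exact ⟨.cons (comap_adj.mpr hac) q, by simp [hq]⟩

/-- Two vertices in the same part are joined through any neighbour of that part. -/
theorem exists_walk_comap_length_le (hf : Surjective f) (hH : H.Connected)
    (hadj : ∀ a, ∃ b, H.Adj a b) (v w : V) :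
    ∃ q : (H.comap f).Walk v w, q.length ≤ max 2 (H.dist (f v) (f w)) := by
  obtain ⟨b, hb⟩ := hadj (f v)
  obtain ⟨p, hp, hple⟩ := hH.exists_walk_length_pos_le hb (f w)
  obtain ⟨q, hq⟩ := p.exists_comap_length_eq hf hp rfl rfl
  exact ⟨q, hq ▸ hple⟩

theorem connected_comap (hf : Surjective f) (hH : H.Connected)
    (hadj : ∀ a, ∃ b, H.Adj a b) : (H.comap f).Connected := by
  have : Nonempty V := hH.nonempty.map (hf · |>.choose)
  refine ⟨fun v w => ?_⟩
  obtain ⟨q, -⟩ := exists_walk_comap_length_le hf hH hadj v w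
  exact q.reachable

theorem dist_comap_le (hf : Surjective f) (hH : H.Connected) (hadj : ∀ a, ∃ b, H.Adj a b)
    (v w : V) : (H.comap f).dist v w ≤ max 2 (H.dist (f v) (f w)) := by
  obtain ⟨q, hq⟩ := exists_walk_comap_length_le hf hH hadj v w
  exact (dist_le q).trans hq

end Comap

section Cycle

variable {n : ℕ}

theorem circulantGraph_one_adj {a b : ZMod n} :
    (circulantGraph ({1} : Set (ZMod n))).Adj a b ↔ a ≠ b ∧ (a - b = 1 ∨ b - a = 1) := by
  simp [circulantGraph_adj]

theorem Walk.exists_intCast_eq_sub {a b : ZMod n}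
    (p : (circulantGraph ({1} : Set (ZMod n))).Walk a b) :
    ∃ m : ℤ, |m| ≤ p.length ∧ (m : ZMod n) = b - a := by
  induction p with
  | nil => exact ⟨0, by simp⟩
  | @cons a c b hac p ih =>
    obtain ⟨m, hm, hmc⟩ := ih
    rw [Walk.length_cons, Nat.cast_succ]
    rcases (circulantGraph_one_adj.mp hac).2 with h | h
    · refine ⟨m - 1, (abs_sub _ _).trans (by simpa using hm), ?_⟩
      push_cast
      linear_combination hmc + h
    · refine ⟨m + 1, (abs_add_le _ _).trans (by simpa using hm), ?_⟩
      push_cast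
      linear_combination hmc - h

theorem circulantGraph_one_colorable_two (hn : 2 ∣ n) :
    (circulantGraph ({1} : Set (ZMod n))).Colorable 2 := by
  refine ⟨Coloring.mk (ZMod.castHom hn (ZMod 2)) fun {a b} hab heq => ?_⟩
  have h : ZMod.castHom hn (ZMod 2) (a - b) = 0 := by rw [map_sub, heq, sub_self]
  rcases (circulantGraph_one_adj.mp hab).2 with hab | hab
  · rw [hab, map_one] at h
    exact one_ne_zero h
  · rw [← neg_sub, hab, map_neg, map_one, neg_eq_zero] at h
    exact one_ne_zero h

variable [Fact (1 < n)]

theorem circulantGraph_one_neighborSet (a : ZMod n) :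
    (circulantGraph ({1} : Set (ZMod n))).neighborSet a = {a - 1, a + 1} := by
  ext b
  simp only [mem_neighborSet, circulantGraph_one_adj, Set.mem_insert_iff, Set.mem_singleton_iff]
  constructor
  · rintro ⟨-, h | h⟩
    · left; linear_combination -h
    · right; linear_combination h
  · rintro (rfl | rfl)
    · exact ⟨fun h => one_ne_zero (by linear_combination h), Or.inl (by ring)⟩
    · exact ⟨fun h => one_ne_zero (by linear_combination -h), Or.inr (by ring)⟩

theorem circulantGraph_one_adj_add_one (a : ZMod n) :
    (circulantGraph ({1} : Set (ZMod n))).Adj a (a + 1) := by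
  simp [← mem_neighborSet, circulantGraph_one_neighborSet]

theorem exists_circulantGraph_one_walk_add_natCast (a : ZMod n) (k : ℕ) :
    ∃ p : (circulantGraph ({1} : Set (ZMod n))).Walk a (a + k), p.length = k := by
  induction k with
  | zero => exact ⟨Walk.nil.copy rfl (by simp), by simp⟩
  | succ k ih =>
    obtain ⟨p, hp⟩ := ih
    refine ⟨(p.concat (circulantGraph_one_adj_add_one _)).copy rfl (by push_cast; ring), ?_⟩
    simp [hp]

theorem exists_circulantGraph_one_walk_length_eq_val (a b : ZMod n) :
    ∃ p : (circulantGraph ({1} : Set (ZMod n))).Walk a b, p.length = (b - a).val := by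
  obtain ⟨p, hp⟩ := exists_circulantGraph_one_walk_add_natCast a (b - a).val
  have hb : a + ((b - a).val : ZMod n) = b := by rw [ZMod.natCast_zmod_val]; ring
  exact ⟨p.copy rfl hb, by simp [hp]⟩

theorem circulantGraph_one_connected : (circulantGraph ({1} : Set (ZMod n))).Connected :=
  ⟨fun a b => (exists_circulantGraph_one_walk_length_eq_val a b).choose.reachable⟩

theorem circulantGraph_one_dist_le_val (a b : ZMod n) :
    (circulantGraph ({1} : Set (ZMod n))).dist a b ≤ (b - a).val := by
  obtain ⟨p, hp⟩ := exists_circulantGraph_one_walk_length_eq_val a b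
  exact hp ▸ dist_le p

theorem two_mul_circulantGraph_one_dist_le (a b : ZMod n) :
    2 * (circulantGraph ({1} : Set (ZMod n))).dist a b ≤ n := by
  have h₁ := circulantGraph_one_dist_le_val a b
  have h₂ := circulantGraph_one_dist_le_val b a
  rw [dist_comm, ← neg_sub, ZMod.neg_val] at h₂
  have := ZMod.val_lt (b - a)
  split_ifs at h₂ <;> omega

theorem le_circulantGraph_one_dist_add (r : ℕ) [Fact (1 < 2 * r)] (a : ZMod (2 * r)) :
    r ≤ (circulantGraph ({1} : Set (ZMod (2 * r)))).dist a (a + r) := by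
  obtain ⟨p, hp⟩ := (circulantGraph_one_connected a (a + r)).exists_walk_length_eq_dist
  obtain ⟨m, hm, hmr⟩ := p.exists_intCast_eq_sub
  obtain ⟨k, hk⟩ : ((2 * r : ℕ) : ℤ) ∣ m - r := by
    rw [← ZMod.intCast_zmod_eq_zero_iff_dvd]
    push_cast
    rw [hmr]
    ring
  rw [← hp]
  push_cast at hk
  rw [abs_le] at hm
  rcases le_or_gt 0 k with hk0 | hk0 <;> nlinarith

end Cycle

section BlowUp

variable {V : Type*} {n : ℕ}

theorem ncard_neighborSet_comap_circulantGraph_one [Finite V] (hn : 2 < n) (f : V → ZMod n)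
    (v : V) : (((circulantGraph ({1} : Set (ZMod n))).comap f).neighborSet v).ncard =
      (f ⁻¹' {f v - 1}).ncard + (f ⁻¹' {f v + 1}).ncard := by
  have : Fact (1 < n) := ⟨by omega⟩
  have hne : f v - 1 ≠ f v + 1 := by
    intro h
    have h2 : ((2 : ℕ) : ZMod n) = 0 := by push_cast; linear_combination -h
    rw [ZMod.natCast_eq_zero_iff] at h2
    exact absurd (Nat.le_of_dvd two_pos h2) (by omega)
  have hnbr : ((circulantGraph ({1} : Set (ZMod n))).comap f).neighborSet v =
      f ⁻¹' {f v - 1} ∪ f ⁻¹' {f v + 1} := by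
    rw [← Set.preimage_union, Set.singleton_union, ← circulantGraph_one_neighborSet]
    rfl
  rw [hnbr, Set.ncard_union_eq]
  exact Disjoint.preimage f (Set.disjoint_singleton.mpr hne)

theorem cliqueFree_three_comap_circulantGraph_one (r : ℕ) (f : V → ZMod (2 * r)) :
    ((circulantGraph ({1} : Set (ZMod (2 * r)))).comap f).CliqueFree 3 :=
  ((circulantGraph_one_colorable_two (dvd_mul_right 2 r)).of_hom (Hom.comap f _)).cliqueFree
    (by norm_num)

theorem graphRadius_comap_circulantGraph_one {r : ℕ} (hr : 2 ≤ r) {f : V → ZMod (2 * r)}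
    (hf : Surjective f) :
    graphRadius ((circulantGraph ({1} : Set (ZMod (2 * r)))).comap f) = r := by
  have : Fact (1 < 2 * r) := ⟨by omega⟩
  have : Nonempty V := ⟨(hf 0).choose⟩
  set H := circulantGraph ({1} : Set (ZMod (2 * r)))
  have hadj : ∀ a, ∃ b, H.Adj a b := fun a => ⟨a + 1, circulantGraph_one_adj_add_one a⟩
  refine graphRadius_eq_of_forall_eccentricity_eq fun v => ?_
  obtain ⟨w, hw⟩ := hf (f v + r)
  refine eccentricity_eq_of_forall_dist_le (w := w) (fun u => ?_) ?_
  · refine (dist_comap_le hf circulantGraph_one_connected hadj v u).trans (max_le hr ?_)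
    linarith [two_mul_circulantGraph_one_dist_le (f v) (f u)]
  · calc r ≤ H.dist (f v) (f w) := hw ▸ le_circulantGraph_one_dist_add r (f v)
      _ ≤ _ := (connected_comap hf circulantGraph_one_connected hadj v w).dist_map_le
          (Hom.comap f H)

end BlowUp

end SimpleGraph

theorem exists_fun_fin_le_ncard_preimage {α : Type*} [Fintype α] [Nonempty α] (s : α → ℕ)
    {N : ℕ} (h : ∑ a, s a ≤ N) : ∃ f : Fin N → α, ∀ a, s a ≤ (f ⁻¹' {a}).ncard := by
  obtain ⟨e⟩ : Nonempty ((Σ a, Fin (s a)) ↪ Fin N) :=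
    Function.Embedding.nonempty_of_card_le (by simpa using h)
  refine ⟨extend e Sigma.fst fun _ => Classical.arbitrary α, fun a => ?_⟩
  have hinj : Injective fun t : Fin (s a) => e ⟨a, t⟩ := fun t t' h => by
    simpa using e.injective h
  calc s a = (Set.range fun t : Fin (s a) => e ⟨a, t⟩).ncard := by
        rw [Set.ncard_range_of_injective hinj, Nat.card_eq_fintype_card, Fintype.card_fin]
    _ ≤ _ := Set.ncard_le_ncard (by rintro _ ⟨t, rfl⟩; simp [e.injective.extend_apply])

theorem ZMod.sum_val_eq_sum_range {M : Type*} [AddCommMonoid M] {n : ℕ} [NeZero n]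
    (g : ℕ → M) : ∑ i : ZMod n, g i.val = ∑ k ∈ range n, g k :=
  sum_nbij' ZMod.val (fun k => (k : ZMod n)) (by simp [ZMod.val_lt]) (by simp) (by simp)
    (fun _ hk => ZMod.val_cast_of_lt (mem_range.mp hk)) (by simp)

def boxSize (δ k : ℕ) : ℕ := if k % 4 < 2 then (δ + 1) / 2 else δ / 2

theorem one_le_boxSize {δ : ℕ} (hδ : 2 ≤ δ) (k : ℕ) : 1 ≤ boxSize δ k := by
  unfold boxSize; split_ifs <;> omega

theorem sum_range_boxSize (δ m : ℕ) :
    ∑ k ∈ range (2 * m), boxSize δ k = m * δ + m % 2 * (δ % 2) := by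
  induction m with
  | zero => simp
  | succ m ih =>
    rw [show 2 * (m + 1) = 2 * m + 1 + 1 by ring, sum_range_succ, sum_range_succ, ih, boxSize,
      boxSize, add_mul]
    rcases Nat.mod_two_eq_zero_or_one m with h | h <;>
      rcases Nat.mod_two_eq_zero_or_one δ with h' | h' <;> split_ifs <;> simp [h, h'] <;> omega

/-- Two boxes at distance two never both have size `⌊δ/2⌋`: away from the wrap-around their
indices differ by `2 mod 4`, and at the wrap-around one of them is box `0` or `1`. -/
theorem le_boxSize_add_boxSize_add_two (δ : ℕ) {r : ℕ} (hr : 2 ≤ r) (i : ZMod (2 * r)) :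
    δ ≤ boxSize δ i.val + boxSize δ (i + 2).val := by
  have : NeZero (2 * r) := ⟨by omega⟩
  have hi := ZMod.val_lt i
  have h2 : (i + 2).val = (i.val + 2) % (2 * r) := by
    rw [ZMod.val_add, show (2 : ZMod (2 * r)) = ((2 : ℕ) : ZMod (2 * r)) by simp,
      ZMod.val_cast_of_lt (by omega)]
  rcases Nat.lt_or_ge (i.val + 2) (2 * r) with h | h
  · rw [h2, Nat.mod_eq_of_lt h]
    unfold boxSize; split_ifs <;> omega
  · rw [h2, Nat.mod_eq_sub_mod h, Nat.mod_eq_of_lt (by omega)]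
    unfold boxSize; split_ifs <;> omega

theorem sum_boxSize_le (r δ c : ℕ) [NeZero r] :
    ∑ i : ZMod (2 * r), boxSize δ i.val ≤ 2 * ((r * δ + 1) / 2) + c := by
  rw [ZMod.sum_val_eq_sum_range, sum_range_boxSize]
  have := Nat.mul_mod r δ 2
  rcases Nat.mod_two_eq_zero_or_one r with h | h <;>
    rcases Nat.mod_two_eq_zero_or_one δ with h' | h' <;> simp [h, h'] at this ⊢ <;> omega

open SimpleGraph in
/-- For integers `r ≥ 4`, `δ ≥ 2`, `c ≥ 0` there is a connected
triangle-free graph with `n = 2⌈rδ/2⌉ + c` vertices, minimum degree `δ` and radius `r`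
(note `⌈a/2⌉ = (a+1)/2` in `ℕ`). -/
theorem radius_girth_stmt10 (r δ c : ℕ) (hr : 4 ≤ r) (hδ : 2 ≤ δ) :
    ∃ G : SimpleGraph (Fin (2 * ((r * δ + 1) / 2) + c)), G.Connected ∧ G.CliqueFree 3 ∧
      (∀ v, δ ≤ (G.neighborSet v).ncard) ∧ graphRadius G = r := by
  have : NeZero r := ⟨by omega⟩
  obtain ⟨f, hf⟩ := exists_fun_fin_le_ncard_preimage _ (sum_boxSize_le r δ c)
  have hsurj : Surjective f := fun i =>
    Set.nonempty_of_ncard_ne_zero (s := f ⁻¹' {i}) (by linarith [one_le_boxSize hδ i.val, hf i])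
  have : Fact (1 < 2 * r) := ⟨by omega⟩
  refine ⟨(circulantGraph {1}).comap f,
    connected_comap hsurj circulantGraph_one_connected
      fun a => ⟨a + 1, circulantGraph_one_adj_add_one a⟩,
    cliqueFree_three_comap_circulantGraph_one r f, fun v => ?_,
    graphRadius_comap_circulantGraph_one (by omega) hsurj⟩
  have hbox := le_boxSize_add_boxSize_add_two δ (by omega) (f v - 1)
  rw [show f v - 1 + 2 = f v + 1 by ring] at hbox
  rw [ncard_neighborSet_comap_circulantGraph_one (by omega)]
  linarith [hf (f v - 1), hf (f v + 1)]
end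

section
/- Let G be a connected simple graph on n vertices with girth at least 2k (k ≥ 2), minimum degree δ ≥ 2, and radius r, and suppose n ≤ c(r+1)δ^(k−1) for some c > 0. Then there exists a (connected, induced) subgraph of G with at most (2k+1)·c·δ^(k−1) vertices and at least (1/2)·δ²·(δ−1)^(k−2) edges; in particular, there exists a graph of girth at least 2k on at most (2k+1)cδ^(k−1) vertices with at least (1/2)δ²(δ−1)^(k−2) edges. -/
open Finset

lemma Finset.exists_mul_card_le_card_of_pairwiseDisjoint {α : Type*} [Fintype α] {m : ℕ}
    {B : ℕ → Finset α} (hB : (range m : Set ℕ).PairwiseDisjoint B) :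
    ∃ j, m * #(B j) ≤ Fintype.card α := by
  classical
  rcases m.eq_zero_or_pos with rfl | hm
  · exact ⟨0, by simp⟩
  obtain ⟨j, -, hmin⟩ := exists_min_image (range m) (fun j => #(B j)) (nonempty_range_iff.2 hm.ne')
  refine ⟨j, ?_⟩
  calc m * #(B j) = #(range m) • #(B j) := by simp
    _ ≤ ∑ i ∈ range m, #(B i) := card_nsmul_le_sum _ _ _ hmin
    _ = #((range m).biUnion B) := (card_biUnion hB).symm
    _ ≤ Fintype.card α := card_le_univ _

namespace SimpleGraph

variable {V : Type*} {G : SimpleGraph V}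

lemma Walk.dist_getVert_of_length_eq_dist {u v : V} (p : G.Walk u v)
    (hp : p.length = G.dist u v) (n : ℕ) : G.dist u (p.getVert n) = min n p.length := by
  rw [← length_eq_dist_of_subwalk hp (p.isSubwalk_take n), Walk.take_length]

lemma Walk.dist_le_length_of_mem_support {u v x : V} (p : G.Walk u v) (hx : x ∈ p.support) :
    G.dist u x ≤ p.length := by
  classical exact (dist_le _).trans (p.length_takeUntil_le_length hx)

lemma Walk.notMem_support_of_length_eq_dist {u y z : V} (p : G.Walk u z)
    (hp : p.length = G.dist u z) (hyz : y ≠ z) (hd : G.dist u z ≤ G.dist u y) :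
    y ∉ p.support := by
  classical
  exact fun hy => ((dist_le _).trans_lt (p.length_takeUntil_lt_length hy hyz)).not_ge (hp ▸ hd)

lemma eq_of_adj_of_dist_le (hconn : G.Connected) {u y z₁ z₂ : V} (h₁ : G.Adj y z₁)
    (h₂ : G.Adj y z₂) (hd₁ : G.dist u z₁ ≤ G.dist u y) (hd₂ : G.dist u z₂ ≤ G.dist u y)
    (hg : ((G.dist u z₁ + G.dist u z₂ + 2 : ℕ) : ℕ∞) < G.egirth) : z₁ = z₂ := by
  obtain ⟨p₁, hp₁, hl₁⟩ := hconn.exists_path_of_dist u z₁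
  obtain ⟨p₂, hp₂, hl₂⟩ := hconn.exists_path_of_dist u z₂
  have hq₁ := hp₁.concat (p₁.notMem_support_of_length_eq_dist hl₁ h₁.ne hd₁) h₁.symm
  have hq₂ := hp₂.concat (p₂.notMem_support_of_length_eq_dist hl₂ h₂.ne hd₂) h₂.symm
  by_contra hne
  obtain ⟨_, -, -, c, hc, hcl⟩ :=
    hq₁.exists_isCycle_length_le_add_of_ne hq₂ fun h => hne (Walk.concat_inj h).1
  have hlen : c.length ≤ G.dist u z₁ + G.dist u z₂ + 2 := by
    simp only [Walk.length_concat, hl₁, hl₂] at hcl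
    omega
  exact ((egirth_le_length hc).trans (Nat.cast_le.2 hlen)).not_gt hg

lemma dist_le_dist_add_one_of_adj (u : V) {v w : V} (h : G.Adj v w) :
    G.dist u w ≤ G.dist u v + 1 := by
  rcases h.diff_dist_adj (u := u) with h | h | h <;> omega

lemma exists_dist_eq_graphRadius [Finite V] [Nonempty V] (G : SimpleGraph V) :
    ∃ v w, G.dist v w = graphRadius G := by
  obtain ⟨v, hv⟩ : graphRadius G ∈ Set.range (eccentricity G) :=
    Nat.sInf_mem (Set.range_nonempty _)
  obtain ⟨w, hw⟩ : eccentricity G v ∈ Set.range (G.dist v) :=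
    Nat.sSup_mem (Set.range_nonempty _) (Set.finite_range _).bddAbove
  exact ⟨v, w, hw.trans hv⟩

variable [Fintype V]

noncomputable def closedBall (G : SimpleGraph V) (u : V) (k : ℕ) : Finset V :=
  {v | G.dist u v ≤ k}

noncomputable def sphere (G : SimpleGraph V) (u : V) (k : ℕ) : Finset V :=
  {v | G.dist u v = k}

@[simp]
lemma mem_closedBall {u v : V} {k : ℕ} : v ∈ G.closedBall u k ↔ G.dist u v ≤ k := by
  simp [closedBall]

@[simp]
lemma mem_sphere {u v : V} {k : ℕ} : v ∈ G.sphere u k ↔ G.dist u v = k := by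
  simp [sphere]

lemma induce_closedBall_connected (hconn : G.Connected) (u : V) (k : ℕ) :
    (G.induce (G.closedBall u k : Set V)).Connected := by
  refine induce_connected_of_patches u (by simp) fun {v} hv => ?_
  obtain ⟨p, -, hp⟩ := hconn.exists_path_of_dist u v
  refine ⟨{x | x ∈ p.support}, fun x hx => ?_, p.start_mem_support, p.end_mem_support,
    p.connected_induce_support.preconnected _ _⟩
  simp only [Set.mem_ofPred_eq, Finset.mem_coe, mem_closedBall] at hv hx ⊢
  exact (p.dist_le_length_of_mem_support hx).trans (hp ▸ hv)

lemma disjoint_closedBall (hconn : G.Connected) {x y : V} {k : ℕ} (h : 2 * k < G.dist x y) :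
    Disjoint (G.closedBall x k) (G.closedBall y k) := by
  refine Finset.disjoint_left.2 fun v hx hy => ?_
  rw [mem_closedBall] at hx hy
  have := hconn.dist_triangle (u := x) (v := v) (w := y)
  rw [dist_comm (u := v)] at this
  omega

lemma exists_mul_card_closedBall_le (hconn : G.Connected) (v₀ w₀ : V) (k : ℕ) :
    ∃ x, (G.dist v₀ w₀ / (2 * k + 1) + 1) * #(G.closedBall x k) ≤ Fintype.card V := by
  classical
  set L := 2 * k + 1
  set m := G.dist v₀ w₀ / L + 1
  obtain ⟨p, -, hp⟩ := hconn.exists_path_of_dist v₀ w₀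
  set x : ℕ → V := fun j => p.getVert (j * L)
  have hx : ∀ j < m, G.dist v₀ (x j) = j * L := fun j hj => by
    rw [p.dist_getVert_of_length_eq_dist hp, min_eq_left]
    rw [hp, ← Nat.le_div_iff_mul_le (by omega)]
    omega
  have hfar : ∀ i < m, ∀ j < m, i < j → 2 * k < G.dist (x i) (x j) := fun i hi j hj hij => by
    have := hconn.dist_triangle (u := v₀) (v := x i) (w := x j)
    rw [hx i hi, hx j hj] at this
    have hL := Nat.mul_le_mul_right L (Nat.succ_le_of_lt hij)
    rw [Nat.succ_mul] at hL
    omega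
  have hdisj : (range m : Set ℕ).PairwiseDisjoint fun j => G.closedBall (x j) k := by
    intro i hi j hj hij
    simp only [coe_range, Set.mem_Iio] at hi hj
    rcases hij.lt_or_gt with h | h
    · exact disjoint_closedBall hconn (hfar i hi j hj h)
    · exact disjoint_closedBall hconn (dist_comm ▸ hfar j hj i hi h)
  obtain ⟨j, hj⟩ := exists_mul_card_le_card_of_pairwiseDisjoint hdisj
  exact ⟨x j, hj⟩

variable [DecidableRel G.Adj]

lemma card_filter_adj_dist_le_le_one (hconn : G.Connected) {u y : V} {j : ℕ}
    (hj : j ≤ G.dist u y) (hg : ((2 * j + 2 : ℕ) : ℕ∞) < G.egirth) :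
    #{z | G.Adj y z ∧ G.dist u z ≤ j} ≤ 1 := by
  refine card_le_one.2 fun z₁ h₁ z₂ h₂ => ?_
  simp only [mem_filter, mem_univ, true_and] at h₁ h₂
  refine eq_of_adj_of_dist_le hconn h₁.1 h₂.1 (h₁.2.trans hj) (h₂.2.trans hj)
    (lt_of_le_of_lt (Nat.cast_le.2 ?_) hg)
  omega

lemma card_sphere_mul_le (hconn : G.Connected) {δ : ℕ} (hδ : ∀ v, δ ≤ G.degree v) (u : V)
    {i : ℕ} (hg : ((2 * i + 2 : ℕ) : ℕ∞) < G.egirth) :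
    #(G.sphere u i) * (δ - 1) ≤ #(G.sphere u (i + 1)) := by
  refine (card_mul_le_card_mul G.Adj (n := 1) (fun a ha => ?_) fun b hb => ?_).trans_eq
    (mul_one _)
  · classical
    rw [mem_sphere] at ha
    have hsub : G.neighborFinset a ⊆ (G.sphere u (i + 1)).bipartiteAbove G.Adj a ∪
        ({z | G.Adj a z ∧ G.dist u z ≤ i} : Finset V) := by
      intro z hz
      rw [mem_neighborFinset] at hz
      have := dist_le_dist_add_one_of_adj u hz
      simp only [mem_union, mem_bipartiteAbove, mem_sphere, mem_filter, mem_univ, true_and]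
      rcases (show G.dist u z = i + 1 ∨ G.dist u z ≤ i by omega) with h | h
      exacts [Or.inl ⟨h, hz⟩, Or.inr ⟨hz, h⟩]
    have := (card_le_card hsub).trans (card_union_le _ _)
    have := card_filter_adj_dist_le_le_one hconn ha.ge hg
    have := hδ a
    rw [← card_neighborFinset_eq_degree] at this
    omega
  · rw [mem_sphere] at hb
    refine (card_le_card fun a ha => ?_).trans
      (card_filter_adj_dist_le_le_one hconn (u := u) (y := b) (j := i) (by omega) hg)
    simp only [mem_bipartiteBelow, mem_sphere, mem_filter, mem_univ, true_and] at ha ⊢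
    exact ⟨ha.2.symm, ha.1.le⟩

lemma mul_pow_le_card_sphere (hconn : G.Connected) {δ : ℕ} (hδ : ∀ v, δ ≤ G.degree v) (u : V) :
    ∀ j : ℕ, ((2 * j + 2 : ℕ) : ℕ∞) < G.egirth → δ * (δ - 1) ^ j ≤ #(G.sphere u (j + 1))
  | 0, _ => by
    simpa [sphere, ← card_neighborFinset_eq_degree, neighborFinset_eq_filter] using hδ u
  | j + 1, hg => calc
    δ * (δ - 1) ^ (j + 1) = δ * (δ - 1) ^ j * (δ - 1) := by ring
    _ ≤ #(G.sphere u (j + 1)) * (δ - 1) := by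
      gcongr
      exact mul_pow_le_card_sphere hconn hδ u j (lt_of_le_of_lt (Nat.cast_le.2 (by omega)) hg)
    _ ≤ #(G.sphere u (j + 1 + 1)) := card_sphere_mul_le hconn hδ u hg

lemma sum_degree_le_two_mul_ncard_edgeSet_induce {s t : Finset V} (hts : t ⊆ s)
    (hN : ∀ v ∈ t, G.neighborSet v ⊆ s) :
    ∑ v ∈ t, G.degree v ≤ 2 * (G.induce (s : Set V)).edgeSet.ncard := by
  classical
  rw [← coe_edgeFinset, Set.ncard_coe_finset, ← sum_degrees_eq_twice_card_edges]
  calc ∑ v ∈ t, G.degree v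
      = ∑ v ∈ t.subtype (· ∈ (s : Set V)), G.degree v :=
        (sum_subtype_of_mem _ fun v hv => hts hv).symm
    _ = ∑ v ∈ t.subtype (· ∈ (s : Set V)), (G.induce (s : Set V)).degree v :=
        sum_congr rfl fun v hv => by
          convert (degree_induce_of_neighborSet_subset (hN v (by simpa using hv))).symm
    _ ≤ ∑ v, (G.induce (s : Set V)).degree v := sum_le_sum_of_subset (subset_univ _)

lemma sq_mul_pow_le_two_mul_ncard_edgeSet_induce_closedBall (hconn : G.Connected) {δ k : ℕ}
    (hδ : ∀ v, δ ≤ G.degree v) (hk : 2 ≤ k) (hg : (2 * k : ℕ∞) ≤ G.egirth) (u : V) :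
    δ ^ 2 * (δ - 1) ^ (k - 2) ≤ 2 * (G.induce (G.closedBall u k : Set V)).edgeSet.ncard := by
  obtain ⟨j, rfl⟩ : ∃ j, k = j + 2 := ⟨k - 2, by omega⟩
  have hsphere : δ * (δ - 1) ^ j ≤ #(G.sphere u (j + 1)) :=
    mul_pow_le_card_sphere hconn hδ u j (lt_of_lt_of_le (by norm_cast; omega) hg)
  calc δ ^ 2 * (δ - 1) ^ (j + 2 - 2)
      = δ * (δ * (δ - 1) ^ j) := by rw [Nat.add_sub_cancel]; ring
    _ ≤ δ * #(G.closedBall u (j + 1)) := by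
      gcongr
      refine hsphere.trans (card_le_card fun v hv => ?_)
      rw [mem_sphere] at hv
      rw [mem_closedBall, hv]
    _ = ∑ _v ∈ G.closedBall u (j + 1), δ := by rw [sum_const, smul_eq_mul, mul_comm]
    _ ≤ ∑ v ∈ G.closedBall u (j + 1), G.degree v := sum_le_sum fun v _ => hδ v
    _ ≤ _ := sum_degree_le_two_mul_ncard_edgeSet_induce
        (fun v hv => by simp only [mem_closedBall] at hv ⊢; omega) fun v hv w hw => by
          have := dist_le_dist_add_one_of_adj u hw
          rw [mem_closedBall] at hv
          rw [Finset.mem_coe, mem_closedBall]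
          omega

end SimpleGraph

theorem radius_girth_stmt14_general {V : Type*} [Fintype V] (G : SimpleGraph V) (k δ : ℕ)
    (hk : 2 ≤ k) (hconn : G.Connected)
    (hgirth : (2 * k : ℕ∞) ≤ G.egirth)
    (hδ : ∀ v : V, δ ≤ (G.neighborSet v).ncard)
    (c : ℝ) (hc : 0 < c)
    (hn : (Fintype.card V : ℝ) ≤ c * (graphRadius G + 1) * (δ : ℝ) ^ (k - 1)) :
    ∃ s : Finset V, (G.induce (s : Set V)).Connected ∧
      (2 * k : ℕ∞) ≤ (G.induce (s : Set V)).egirth ∧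
      ((s.card : ℝ) ≤ (2 * k + 1) * c * (δ : ℝ) ^ (k - 1)) ∧
      δ ^ 2 * (δ - 1) ^ (k - 2) ≤ 2 * (G.induce (s : Set V)).edgeSet.ncard := by
  classical
  have : Nonempty V := hconn.nonempty
  have hdeg : ∀ v, δ ≤ G.degree v := fun v => by
    rw [← G.card_neighborSet_eq_degree, ← Nat.card_eq_fintype_card, Nat.card_coe_set_eq]
    exact hδ v
  obtain ⟨v₀, w₀, hr⟩ := G.exists_dist_eq_graphRadius
  obtain ⟨x, hx⟩ := G.exists_mul_card_closedBall_le hconn v₀ w₀ k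
  rw [hr] at hx
  refine ⟨G.closedBall x k, G.induce_closedBall_connected hconn x k,
    hgirth.trans (SimpleGraph.IsContained.egirth_le ⟨SimpleGraph.Copy.induce G _⟩), ?_,
    G.sq_mul_pow_le_two_mul_ncard_edgeSet_induce_closedBall hconn hdeg hk hgirth x⟩
  set m := graphRadius G / (2 * k + 1) + 1
  have hm : (graphRadius G + 1 : ℝ) ≤ m * (2 * k + 1) := by
    exact_mod_cast (Nat.lt_mul_div_succ (graphRadius G) (by omega : 0 < 2 * k + 1)).trans_eq
      (mul_comm _ _)
  refine le_of_mul_le_mul_left ?_ (by positivity : (0 : ℝ) < m)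
  calc (m : ℝ) * #(G.closedBall x k) ≤ Fintype.card V := by exact_mod_cast hx
    _ ≤ c * (graphRadius G + 1) * δ ^ (k - 1) := hn
    _ ≤ c * (m * (2 * k + 1)) * δ ^ (k - 1) := by gcongr
    _ = m * ((2 * k + 1) * c * δ ^ (k - 1)) := by ring

/-- If `G` is connected on `n` vertices with girth at least `2k` (`k ≥ 2`),
minimum degree `δ ≥ 2` and radius `r`, and `n ≤ c(r+1)δ^(k-1)` for some `c > 0`, then
there is a connected induced subgraph of `G` (in particular of girth at least `2k`)
with at most `(2k+1)cδ^(k-1)` vertices and at least `(1/2)δ²(δ-1)^(k-2)` edges. -/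
theorem radius_girth_stmt14 {V : Type*} [Fintype V] (G : SimpleGraph V) (k δ : ℕ)
    (hk : 2 ≤ k) (hδ2 : 2 ≤ δ) (hconn : G.Connected)
    (hgirth : (2 * k : ℕ∞) ≤ G.egirth)
    (hδ : ∀ v : V, δ ≤ (G.neighborSet v).ncard)
    (c : ℝ) (hc : 0 < c)
    (hn : (Fintype.card V : ℝ) ≤ c * (graphRadius G + 1) * (δ : ℝ) ^ (k - 1)) :
    ∃ s : Finset V, (G.induce (s : Set V)).Connected ∧
      (2 * k : ℕ∞) ≤ (G.induce (s : Set V)).egirth ∧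
      ((s.card : ℝ) ≤ (2 * k + 1) * c * (δ : ℝ) ^ (k - 1)) ∧
      δ ^ 2 * (δ - 1) ^ (k - 2) ≤ 2 * (G.induce (s : Set V)).edgeSet.ncard :=
  radius_girth_stmt14_general G k δ hk hconn hgirth hδ c hc hn
end

section
/- Let G be a connected graph, let v_0, v_1, …, v_r be a geodesic path of length r from v_0, and let v_0 = v'_0, v'_1, …, v'_{r−t} be another geodesic path from v_0 of length r − t. Then for all i ≠ j, v_i ≠ v'_j. Moreover, fixing 1 ≤ m ≤ r−1, if d(v_m, v'_{r−t}) ≥ r then v_i ≠ v'_i for all i > (m + r − t − d(v_m, v'_{r−t}))/2. -/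
/-! Distances from `v 0` tell the indices apart, which gives the first claim. For the second,
if `v i = v' i` then the detour `v m → v i = v' i → v' (r - t)` along the two paths has length
`|m - i| + (r - t - i)`: for `i ≤ m` this contradicts the lower bound on `2 i`, and for `i > m`
it is `r - t - m < r`. -/

namespace SimpleGraph

variable {V : Type*} {G : SimpleGraph V} {w : ℕ → V} {n : ℕ}

theorem exists_walk_length_eq_sub_of_adj_succ (hadj : ∀ k < n, G.Adj (w k) (w (k + 1)))
    {a b : ℕ} (hab : a ≤ b) (hbn : b ≤ n) : ∃ p : G.Walk (w a) (w b), p.length = b - a := by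
  induction b, hab using Nat.le_induction with
  | base => exact ⟨Walk.nil, by simp⟩
  | succ b hab ih =>
    obtain ⟨p, hp⟩ := ih (by omega)
    exact ⟨p.concat (hadj b (by omega)), by simp only [Walk.length_concat]; omega⟩

theorem exists_walk_length_eq_sub_add_sub_of_adj_succ
    (hadj : ∀ k < n, G.Adj (w k) (w (k + 1))) {a b : ℕ} (ha : a ≤ n) (hb : b ≤ n) :
    ∃ p : G.Walk (w a) (w b), p.length = (a - b) + (b - a) := by
  rcases le_total a b with hab | hba
  · obtain ⟨p, hp⟩ := exists_walk_length_eq_sub_of_adj_succ hadj hab hb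
    exact ⟨p, by omega⟩
  · obtain ⟨p, hp⟩ := exists_walk_length_eq_sub_of_adj_succ hadj hba ha
    exact ⟨p.reverse, by rw [Walk.length_reverse]; omega⟩

theorem dist_le_of_eq_of_adj_succ {r : ℕ} {v v' : ℕ → V}
    (hadj : ∀ k < r, G.Adj (v k) (v (k + 1))) (hadj' : ∀ k < n, G.Adj (v' k) (v' (k + 1)))
    {i m : ℕ} (hmeet : v i = v' i) (hir : i ≤ r) (hin : i ≤ n) (hm : m ≤ r) :
    G.dist (v m) (v' n) ≤ (m - i) + (i - m) + (n - i) := by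
  obtain ⟨p, hp⟩ := exists_walk_length_eq_sub_add_sub_of_adj_succ hadj hm hir
  obtain ⟨q, hq⟩ := exists_walk_length_eq_sub_of_adj_succ hadj' hin le_rfl
  calc G.dist (v m) (v' n) ≤ (p.append (q.copy hmeet.symm rfl)).length := dist_le _
    _ = (m - i) + (i - m) + (n - i) := by simp [hp, hq]

end SimpleGraph

theorem radius_girth_stmt17_general {V : Type*} (G : SimpleGraph V)
    (r t : ℕ) (ht : t ≤ r)
    (v v' : ℕ → V)
    (hgeo : ∀ i ≤ r, G.dist (v 0) (v i) = i)
    (hadj : ∀ i < r, G.Adj (v i) (v (i + 1)))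
    (hgeo' : ∀ j ≤ r - t, G.dist (v 0) (v' j) = j)
    (hadj' : ∀ j < r - t, G.Adj (v' j) (v' (j + 1))) :
    (∀ i ≤ r, ∀ j ≤ r - t, i ≠ j → v i ≠ v' j) ∧
    (∀ m, 1 ≤ m → m ≤ r - 1 → r ≤ G.dist (v m) (v' (r - t)) →
      ∀ i ≤ r - t,
        (m : ℤ) + r - t - G.dist (v m) (v' (r - t)) < 2 * i → v i ≠ v' i) := by
  refine ⟨fun i hi j hj hij hmeet => hij ?_, fun m hm1 hmr hfar i hi hlt hmeet => ?_⟩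
  · rw [← hgeo i hi, ← hgeo' j hj, hmeet]
  · have hdetour := SimpleGraph.dist_le_of_eq_of_adj_succ hadj hadj' hmeet
      (by omega) hi (hmr.trans (r.sub_le 1))
    omega

/-- Given geodesic paths `v 0, …, v r` and `v' 0 = v 0, …, v' (r - t)`:
for `i ≠ j` we have `v i ≠ v' j`; moreover for `1 ≤ m ≤ r - 1` with
`d(v m, v' (r - t)) ≥ r`, we have `v i ≠ v' i` for all
`i > (m + r - t - d(v m, v' (r-t)))/2`. -/
theorem radius_girth_stmt17 {V : Type*} (G : SimpleGraph V) (hconn : G.Connected)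
    (r t : ℕ) (ht : t ≤ r)
    (v v' : ℕ → V) (hv0 : v' 0 = v 0)
    (hgeo : ∀ i ≤ r, G.dist (v 0) (v i) = i)
    (hadj : ∀ i < r, G.Adj (v i) (v (i + 1)))
    (hgeo' : ∀ j ≤ r - t, G.dist (v 0) (v' j) = j)
    (hadj' : ∀ j < r - t, G.Adj (v' j) (v' (j + 1))) :
    (∀ i ≤ r, ∀ j ≤ r - t, i ≠ j → v i ≠ v' j) ∧
    (∀ m, 1 ≤ m → m ≤ r - 1 → r ≤ G.dist (v m) (v' (r - t)) →
      ∀ i ≤ r - t,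
        (m : ℤ) + r - t - G.dist (v m) (v' (r - t)) < 2 * i → v i ≠ v' i) :=
  radius_girth_stmt17_general G r t ht v v' hgeo hadj hgeo' hadj'
end
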